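/- Let p ≥ 2 be an integer and α, β ∈ ℝ, and define g(τ) = (1−τ)^{p+2}(1+τ)^{p−2}·(α + β·I₊(τ)) for τ ∈ (−1,1). Then g extends to a C^∞ function on a neighbourhood of τ = 1 (i.e. there exist ε ∈ (0,1) and a function h smooth on (1−ε, 1+ε) agreeing with g on (1−ε,1)) if and only if β = 0. -/

import Mathlib

/-- The integral `I₊(τ) = ∫₀^τ (1+s)^{−(p−1)} (1−s)^{−(p+3)} ds`. -/
noncomputable def Iplus (p : ℕ) (τ : ℝ) : ℝ :=
  ∫ s in (0 : ℝ)..τ, 1 / ((1 + s) ^ (p - 1) * (1 - s) ^ (p + 3))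

/-- Let `p ≥ 2`, `α β : ℝ`, and `g(τ) = (1−τ)^(p+2)(1+τ)^(p−2)(α + β I₊(τ))` on `(−1,1)`.
Then `g` extends to a `C^∞` function on a neighbourhood of `τ = 1` (i.e. there exist
`ε ∈ Set.Ioo 0 1` and a function `h` smooth on `(1−ε, 1+ε)` agreeing with `g` on `(1−ε, 1)`)
if and only if `β = 0`. -/
theorem stmt_5 (p : ℕ) (hp : 2 ≤ p) (α β : ℝ) :
    (∃ ε ∈ Set.Ioo (0 : ℝ) 1, ∃ h : ℝ → ℝ,
        ContDiffOn ℝ (⊤ : ℕ∞) h (Set.Ioo (1 - ε) (1 + ε)) ∧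
        ∀ τ ∈ Set.Ioo (1 - ε) (1 : ℝ),
          h τ = (1 - τ) ^ (p + 2) * (1 + τ) ^ (p - 2) * (α + β * Iplus p τ))
      ↔ β = 0 := by
  constructor
  · rintro ⟨ε, ⟨hε0, hε1⟩, h, hC, heq⟩
    obtain ⟨m, rfl⟩ : ∃ m, p = m + 2 := ⟨p - 2, by omega⟩
    clear hp
    set s : Set ℝ := Set.Ioo (1 - ε) (1 + ε) with hs
    set J : Set ℝ := Set.Ioo (1 - ε) 1 with hJdef
    have hsopen : IsOpen s := isOpen_Ioo
    have hJopen : IsOpen J := isOpen_Ioo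
    have h1s : (1 : ℝ) ∈ s := ⟨by linarith, by linarith⟩
    have hJs : J ⊆ s := fun x hx => ⟨hx.1, by rcases hx with ⟨a, b⟩; linarith⟩
    have hJ01 : ∀ x ∈ J, 0 < x ∧ x < 1 := fun x hx => ⟨by rcases hx with ⟨a, b⟩; linarith, hx.2⟩
    -- iterated derivatives of h
    set u : ℕ → ℝ → ℝ := fun n => iteratedDeriv n h with hu_def
    have hu : ∀ n, ContDiffOn ℝ (⊤ : ℕ∞) (u n) s := by
      intro n
      induction n with
      | zero => simpa [hu_def] using hC
      | succ k ih =>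
        have : u (k + 1) = deriv (u k) := by
          funext x; simp [hu_def, iteratedDeriv_succ]
        rw [this]
        exact ih.deriv_of_isOpen hsopen (by simp)
    have huderiv : ∀ n, ∀ x ∈ s, HasDerivAt (u n) (u (n + 1) x) x := by
      intro n x hx
      have hdiff : DifferentiableAt ℝ (u n) x :=
        (((hu n).differentiableOn (by simp)) x hx).differentiableAt (hsopen.mem_nhds hx)
      have : u (n + 1) x = deriv (u n) x := by simp [hu_def, iteratedDeriv_succ]
      rw [this]
      exact hdiff.hasDerivAt
    have hucont : ∀ n, ContinuousOn (u n) s := fun n => (hu n).continuousOn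
    -- value at 1 by continuity
    have hclosure : (1 : ℝ) ∈ closure J := by
      rw [hJdef, closure_Ioo (by linarith : (1 : ℝ) - ε ≠ 1)]
      exact ⟨by linarith, le_refl 1⟩
    have hne : (nhdsWithin (1 : ℝ) J).NeBot := mem_closure_iff_nhdsWithin_neBot.mp hclosure
    have limit0 : ∀ F : ℝ → ℝ, ContinuousOn F s → (∀ x ∈ J, F x = 0) → F 1 = 0 := by
      intro F hFc hF0
      have h1 : Filter.Tendsto F (nhdsWithin (1 : ℝ) J) (nhds (F 1)) :=
        (hFc.continuousAt (hsopen.mem_nhds h1s)).continuousWithinAt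
      have h2 : Filter.Tendsto F (nhdsWithin (1 : ℝ) J) (nhds 0) := by
        refine Filter.Tendsto.congr' ?_ tendsto_const_nhds
        filter_upwards [self_mem_nhdsWithin] with x hx using (hF0 x hx).symm
      exact tendsto_nhds_unique h1 h2
    -- the integrand of Iplus
    set f : ℝ → ℝ := fun t => 1 / ((1 + t) ^ (m + 1) * (1 - t) ^ (m + 5)) with hf_def
    have hIplus : ∀ τ, Iplus (m + 2) τ = ∫ t in (0 : ℝ)..τ, f t := by
      intro τ
      simp only [Iplus, hf_def, show m + 2 - 1 = m + 1 from by omega,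
        show m + 2 + 3 = m + 5 from by omega]
    have hfc : ContinuousOn f (Set.Ioo (-1 : ℝ) 1) := by
      intro x hx
      refine (ContinuousAt.continuousWithinAt ?_)
      refine ContinuousAt.div continuousAt_const ?_ ?_
      · exact (((continuous_const.add continuous_id).pow _).mul
          ((continuous_const.sub continuous_id).pow _)).continuousAt
      · have h1 : (1 : ℝ) + x ≠ 0 := by rcases hx with ⟨a, b⟩; intro hc; linarith
        have h2 : (1 : ℝ) - x ≠ 0 := by rcases hx with ⟨a, b⟩; intro hc; linarith
        exact mul_ne_zero (pow_ne_zero _ h1) (pow_ne_zero _ h2)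
    have hI : ∀ τ ∈ J, HasDerivAt (Iplus (m + 2)) (f τ) τ := by
      intro τ hτ
      obtain ⟨h0τ, hτ1⟩ := hJ01 τ hτ
      have hτIoo : τ ∈ Set.Ioo (-1 : ℝ) 1 := ⟨by linarith, hτ1⟩
      have hsub : Set.uIcc (0 : ℝ) τ ⊆ Set.Ioo (-1) 1 := by
        rw [Set.uIcc_of_le h0τ.le]
        intro x hx
        exact ⟨by rcases hx with ⟨a, b⟩; linarith, lt_of_le_of_lt hx.2 hτ1⟩
      have hint : IntervalIntegrable f MeasureTheory.volume 0 τ :=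
        (hfc.mono hsub).intervalIntegrable
      have hmeas : StronglyMeasurableAtFilter f (nhds τ) :=
        hfc.stronglyMeasurableAtFilter isOpen_Ioo τ hτIoo
      have hcontAt : ContinuousAt f τ := hfc.continuousAt (isOpen_Ioo.mem_nhds hτIoo)
      have := intervalIntegral.integral_hasDerivAt_right hint hmeas hcontAt
      have heqfun : Iplus (m + 2) = fun τ => ∫ t in (0 : ℝ)..τ, f t := funext hIplus
      rw [heqfun]
      exact this
    -- base ODE on J : (1-τ²) h' + (4+(2m+4)τ) h = β
    have base : ∀ τ ∈ J,
        (1 - τ ^ 2) * u 1 τ + (4 + (2 * (m : ℝ) + 4) * τ) * u 0 τ = β := by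
      intro τ hτ
      obtain ⟨h0τ, hτ1⟩ := hJ01 τ hτ
      have h1t : (1 : ℝ) - τ ≠ 0 := by intro hc; linarith
      have h2t : (1 : ℝ) + τ ≠ 0 := by intro hc; linarith
      have hA : HasDerivAt (fun t => α + β * Iplus (m + 2) t) (β * f τ) τ :=
        ((hI τ hτ).const_mul β).const_add α
      have hw1 : HasDerivAt (fun t : ℝ => (1 - t) ^ (m + 4))
          (-(((m : ℝ) + 4) * (1 - τ) ^ (m + 3))) τ := by
        have hb : HasDerivAt (fun t : ℝ => 1 - t) (-1) τ := (hasDerivAt_id τ).const_sub 1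
        have := (hasDerivAt_pow (m + 4) ((1 : ℝ) - τ)).comp τ hb
        refine this.congr_deriv ?_
        simp only [show m + 4 - 1 = m + 3 from by omega]
        push_cast
        ring
      have hw2 : HasDerivAt (fun t : ℝ => (1 + t) ^ m) ((m : ℝ) * (1 + τ) ^ (m - 1)) τ := by
        have hb : HasDerivAt (fun t : ℝ => 1 + t) 1 τ := (hasDerivAt_id τ).const_add 1
        have := (hasDerivAt_pow m ((1 : ℝ) + τ)).comp τ hb
        exact this.congr_deriv (by simp)
      have hg : HasDerivAt (fun t => (1 - t) ^ (m + 4) * (1 + t) ^ m * (α + β * Iplus (m + 2) t))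
          ((-(((m : ℝ) + 4) * (1 - τ) ^ (m + 3)) * (1 + τ) ^ m
            + (1 - τ) ^ (m + 4) * ((m : ℝ) * (1 + τ) ^ (m - 1))) * (α + β * Iplus (m + 2) τ)
            + (1 - τ) ^ (m + 4) * (1 + τ) ^ m * (β * f τ)) τ :=
        (hw1.mul hw2).mul hA
      have hEq : h =ᶠ[nhds τ]
          fun t => (1 - t) ^ (m + 4) * (1 + t) ^ m * (α + β * Iplus (m + 2) t) := by
        filter_upwards [hJopen.mem_nhds hτ] with x hx
        simpa [show m + 2 + 2 = m + 4 from by omega, show m + 2 - 2 = m from by omega]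
          using heq x hx
      have hh : HasDerivAt h
          ((-(((m : ℝ) + 4) * (1 - τ) ^ (m + 3)) * (1 + τ) ^ m
            + (1 - τ) ^ (m + 4) * ((m : ℝ) * (1 + τ) ^ (m - 1))) * (α + β * Iplus (m + 2) τ)
            + (1 - τ) ^ (m + 4) * (1 + τ) ^ m * (β * f τ)) τ :=
        hg.congr_of_eventuallyEq hEq
      have hu1 : u 1 τ = (-(((m : ℝ) + 4) * (1 - τ) ^ (m + 3)) * (1 + τ) ^ m
            + (1 - τ) ^ (m + 4) * ((m : ℝ) * (1 + τ) ^ (m - 1))) * (α + β * Iplus (m + 2) τ)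
            + (1 - τ) ^ (m + 4) * (1 + τ) ^ m * (β * f τ) := by
        have : u 1 τ = deriv h τ := by simp [hu_def, iteratedDeriv_one]
        rw [this, hh.deriv]
      have hu0 : u 0 τ = (1 - τ) ^ (m + 4) * (1 + τ) ^ m * (α + β * Iplus (m + 2) τ) := by
        have : u 0 τ = h τ := by simp [hu_def]
        rw [this]
        simpa [show m + 2 + 2 = m + 4 from by omega, show m + 2 - 2 = m from by omega]
          using heq τ hτ
      rw [hu1, hu0, hf_def]
      rcases m with _ | k
      · norm_num
        field_simp
        ring
      · have hcast : ((k : ℝ) + 1) = ((k + 1 : ℕ) : ℝ) := by push_cast; ring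
        simp only [show k + 1 - 1 = k from by omega]
        field_simp
        ring
    -- general differentiation step
    have step : ∀ (k : ℕ) (c₁ C : ℝ) (Ψ Ψ' : ℝ → ℝ),
        (∀ t ∈ s, HasDerivAt Ψ (Ψ' t) t) →
        (∀ t ∈ J, (1 - t ^ 2) * u (k + 1) t + (4 + c₁ * t) * u k t + Ψ t = C) →
        ∀ τ ∈ J, (1 - τ ^ 2) * u (k + 2) τ + (4 + (c₁ - 2) * τ) * u (k + 1) τ
          + (c₁ * u k τ + Ψ' τ) = 0 := by
      intro k c₁ C Ψ Ψ' hΨ hrel τ hτ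
      have hτs := hJs hτ
      have e1 : HasDerivAt (fun t : ℝ => 1 - t ^ 2) (-(2 * τ)) τ := by
        have := (hasDerivAt_pow 2 τ).const_sub 1
        simpa using this
      have e3 : HasDerivAt (fun t : ℝ => 4 + c₁ * t) c₁ τ := by
        simpa using ((hasDerivAt_id τ).const_mul c₁).const_add 4
      have h1 : HasDerivAt (fun t => (1 - t ^ 2) * u (k + 1) t + (4 + c₁ * t) * u k t + Ψ t)
          ((-(2 * τ) * u (k + 1) τ + (1 - τ ^ 2) * u (k + 2) τ)
            + (c₁ * u k τ + (4 + c₁ * τ) * u (k + 1) τ) + Ψ' τ) τ :=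
        ((e1.mul (huderiv (k + 1) τ hτs)).add (e3.mul (huderiv k τ hτs))).add (hΨ τ hτs)
      have h0 : HasDerivAt (fun t => (1 - t ^ 2) * u (k + 1) t + (4 + c₁ * t) * u k t + Ψ t)
          0 τ := by
        refine (hasDerivAt_const τ C).congr_of_eventuallyEq ?_
        filter_upwards [hJopen.mem_nhds hτ] with x hx using hrel x hx
      have huniq := h1.unique h0
      linear_combination huniq
    -- the hierarchy of relations
    have qrel : ∀ n : ℕ, ∀ τ ∈ J,
        (1 - τ ^ 2) * u (n + 2) τ + (4 + (2 * (m : ℝ) + 2 - 2 * n) * τ) * u (n + 1) τ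
          + (((n : ℝ) + 1) * (2 * (m : ℝ) + 4 - n)) * u n τ = 0 := by
      intro n
      induction n with
      | zero =>
        intro τ hτ
        have := step 0 (2 * (m : ℝ) + 4) β (fun _ => 0) (fun _ => 0)
          (fun t _ => hasDerivAt_const t 0)
          (fun t ht => by simpa using base t ht) τ hτ
        push_cast
        linear_combination this
      | succ n ih =>
        intro τ hτ
        have hΨ : ∀ t ∈ s, HasDerivAt
            (fun t => (((n : ℝ) + 1) * (2 * (m : ℝ) + 4 - n)) * u n t)
            ((((n : ℝ) + 1) * (2 * (m : ℝ) + 4 - n)) * u (n + 1) t) t :=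
          fun t ht => (huderiv n t ht).const_mul _
        have := step (n + 1) (2 * (m : ℝ) + 2 - 2 * n) 0
          (fun t => (((n : ℝ) + 1) * (2 * (m : ℝ) + 4 - n)) * u n t)
          (fun t => (((n : ℝ) + 1) * (2 * (m : ℝ) + 4 - n)) * u (n + 1) t)
          hΨ (fun t ht => by linear_combination ih t ht) τ hτ
        push_cast
        linear_combination this
    -- relations at τ = 1
    have rel1 : ∀ n : ℕ,
        (4 + (2 * (m : ℝ) + 2 - 2 * n)) * u (n + 1) 1
          + (((n : ℝ) + 1) * (2 * (m : ℝ) + 4 - n)) * u n 1 = 0 := by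
      intro n
      have hcontF : ContinuousOn (fun τ =>
          (1 - τ ^ 2) * u (n + 2) τ + (4 + (2 * (m : ℝ) + 2 - 2 * n) * τ) * u (n + 1) τ
            + (((n : ℝ) + 1) * (2 * (m : ℝ) + 4 - n)) * u n τ) s := by
        refine ContinuousOn.add (ContinuousOn.add ?_ ?_) ?_
        · exact ((continuous_const.sub (continuous_pow 2)).continuousOn).mul (hucont (n + 2))
        · exact ((continuous_const.add (continuous_const.mul continuous_id)).continuousOn).mul
            (hucont (n + 1))
        · exact continuousOn_const.mul (hucont n)
      have := limit0 _ hcontF (qrel n)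
      linear_combination this
    have base1 : (4 + (2 * (m : ℝ) + 4)) * u 0 1 = β := by
      have hcontF : ContinuousOn (fun τ =>
          (1 - τ ^ 2) * u 1 τ + (4 + (2 * (m : ℝ) + 4) * τ) * u 0 τ - β) s := by
        refine ContinuousOn.sub (ContinuousOn.add ?_ ?_) continuousOn_const
        · exact ((continuous_const.sub (continuous_pow 2)).continuousOn).mul (hucont 1)
        · exact ((continuous_const.add (continuous_const.mul continuous_id)).continuousOn).mul
            (hucont 0)
      have := limit0 _ hcontF (fun x hx => by linear_combination base x hx)
      linear_combination this
    -- u (m+3) 1 = 0 from rel1 at n = m+3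
    have htop : u (m + 3) 1 = 0 := by
      have := rel1 (m + 3)
      have hcoeff1 : (4 + (2 * (m : ℝ) + 2 - 2 * ((m : ℕ) + 3 : ℕ))) = 0 := by
        push_cast; ring
      have hcoeff2 : ((((m : ℕ) + 3 : ℕ) : ℝ) + 1) * (2 * (m : ℝ) + 4 - ((m : ℕ) + 3 : ℕ)) ≠ 0 := by
        push_cast
        have h1 : (0 : ℝ) < (m : ℝ) + 3 + 1 := by positivity
        have h2 : (0 : ℝ) < (m : ℝ) + 1 := by positivity
        intro hc
        nlinarith
      rw [hcoeff1] at this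
      push_cast at this hcoeff2 ⊢
      have : ((m : ℝ) + 3 + 1) * (2 * (m : ℝ) + 4 - ((m : ℝ) + 3)) * u (m + 3) 1 = 0 := by
        linear_combination this
      rcases mul_eq_zero.mp this with hc | hc
      · exact absurd hc hcoeff2
      · exact hc
    -- downward induction
    have hdown : ∀ j : ℕ, j ≤ m + 3 → u (m + 3 - j) 1 = 0 := by
      intro j
      induction j with
      | zero => intro _; simpa using htop
      | succ j ih =>
        intro hj
        have hj' : j ≤ m + 3 := by omega
        have ihv := ih hj'
        set n : ℕ := m + 3 - (j + 1) with hn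
        have hn1 : n + 1 = m + 3 - j := by omega
        have hnle : n ≤ m + 2 := by omega
        have := rel1 n
        rw [hn1, ihv, mul_zero, zero_add] at this
        have hcoeff : (((n : ℝ) + 1) * (2 * (m : ℝ) + 4 - n)) ≠ 0 := by
          have h1 : (0 : ℝ) < (n : ℝ) + 1 := by positivity
          have h2 : (n : ℝ) ≤ (m : ℝ) + 2 := by exact_mod_cast Nat.cast_le.mpr hnle
          have h3 : (0 : ℝ) < 2 * (m : ℝ) + 4 - n := by linarith [Nat.cast_nonneg (α := ℝ) m]
          positivity
        exact (mul_eq_zero.mp this).resolve_left hcoeff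
    have hu0 : u 0 1 = 0 := by
      have := hdown (m + 3) (le_refl _)
      simpa using this
    rw [hu0] at base1
    linarith [base1]
  · rintro rfl
    refine ⟨1 / 2, by norm_num, fun τ => (1 - τ) ^ (p + 2) * (1 + τ) ^ (p - 2) * α, ?_, ?_⟩
    · exact ((((contDiff_const.sub contDiff_id).pow _).mul
        ((contDiff_const.add contDiff_id).pow _)).mul contDiff_const).contDiffOn
    · intro τ hτ
      ring
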